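/- Let G be a group with a finite generating set S that is closed under taking inverses, equipped with the word-length metric d(g,h) = (length of the shortest word in S representing g·h⁻¹). Then G satisfies condition (C) (equivalently, has connected Higson corona) if and only if G has at most one end, i.e., the Cayley graph of G with respect to S (the simple graph on vertex set G with g adjacent to gs for each g ∈ G and s ∈ S with s ≠ 1) has at most one end. -/

import Mathlib

/-!
Condition (C) for a metric space `X` says exactly that every coarsely clopen set `A ⊆ X` is
bounded or has bounded complement: a coarse map `f : X → Y + Z` gives the coarsely clopen set
`f⁻¹ Y`, and a coarsely clopen `A` gives the coarse map `X → X + X` sending `A` to the left copy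
and `Aᶜ` to the right one.

For the word metric, `g ↦ g⁻¹` is an isometry from the path metric of the Cayley graph onto
`(G, d)`, so bounded sets are the finite ones and coarsely clopen sets are those with finite
boundary in the Cayley graph. In a connected locally finite graph, two distinct ends are
separated by a finite set `K`, and a component of the complement of `K` is an infinite set with
infinite complement and finite boundary; conversely, if `A` and `Aᶜ` are infinite and the
boundary `K` of `A` is finite, then infinite components of the complement of `K` lie on both
sides of `A`, and ends through them (König's lemma) are distinct.
-/

open Bornology

def Bornologous {X Y : Type*} [PseudoMetricSpace X] [PseudoMetricSpace Y] (f : X → Y) : Prop :=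
  ∀ R : ℝ, 0 < R → ∃ S : ℝ, 0 < S ∧ ∀ x x' : X, dist x x' ≤ R → dist (f x) (f x') ≤ S

def ProperMap {X Y : Type*} [PseudoMetricSpace X] [PseudoMetricSpace Y] (f : X → Y) : Prop :=
  ∀ B : Set Y, IsBounded B → IsBounded (f ⁻¹' B)

def IsCoarse {X Y : Type*} [PseudoMetricSpace X] [PseudoMetricSpace Y] (f : X → Y) : Prop :=
  Bornologous f ∧ ProperMap f

def Close {X Y : Type*} [PseudoMetricSpace Y] (f g : X → Y) : Prop :=
  ∃ R : ℝ, 0 < R ∧ ∀ x : X, dist (f x) (g x) ≤ R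

def coprodDist {X Y : Type*} [MetricSpace X] [MetricSpace Y] (x₀ : X) (y₀ : Y) :
    X ⊕ Y → X ⊕ Y → ℝ
  | Sum.inl a, Sum.inl b => dist a b
  | Sum.inl a, Sum.inr b => dist a x₀ + 1 + dist y₀ b
  | Sum.inr a, Sum.inl b => dist b x₀ + 1 + dist y₀ a
  | Sum.inr a, Sum.inr b => dist a b

noncomputable def coprodMetric {X Y : Type*} [MetricSpace X] [MetricSpace Y]
    (x₀ : X) (y₀ : Y) : MetricSpace (X ⊕ Y) where
  dist := coprodDist x₀ y₀
  dist_self := by rintro (a | a) <;> simp [coprodDist]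
  dist_comm := fun p q => by
    match p, q with
    | Sum.inl a, Sum.inl b => exact dist_comm a b
    | Sum.inl a, Sum.inr b => rfl
    | Sum.inr a, Sum.inl b => rfl
    | Sum.inr a, Sum.inr b => exact dist_comm a b
  dist_triangle := fun p q r => by
    match p, q, r with
    | Sum.inl a, Sum.inl b, Sum.inl c => exact dist_triangle a b c
    | Sum.inl a, Sum.inl b, Sum.inr c =>
      show dist a x₀ + 1 + dist y₀ c ≤ dist a b + (dist b x₀ + 1 + dist y₀ c)
      have := dist_triangle a b x₀; linarith
    | Sum.inl a, Sum.inr b, Sum.inl c =>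
      show dist a c ≤ (dist a x₀ + 1 + dist y₀ b) + (dist c x₀ + 1 + dist y₀ b)
      have h1 := dist_triangle a x₀ c
      have h2 : dist x₀ c = dist c x₀ := dist_comm _ _
      have h3 := dist_nonneg (x := y₀) (y := b)
      linarith
    | Sum.inl a, Sum.inr b, Sum.inr c =>
      show dist a x₀ + 1 + dist y₀ c ≤ (dist a x₀ + 1 + dist y₀ b) + dist b c
      have := dist_triangle y₀ b c; linarith
    | Sum.inr a, Sum.inl b, Sum.inl c =>
      show dist c x₀ + 1 + dist y₀ a ≤ (dist b x₀ + 1 + dist y₀ a) + dist b c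
      have h1 := dist_triangle c b x₀
      have h2 : dist c b = dist b c := dist_comm _ _
      linarith
    | Sum.inr a, Sum.inl b, Sum.inr c =>
      show dist a c ≤ (dist b x₀ + 1 + dist y₀ a) + (dist b x₀ + 1 + dist y₀ c)
      have h1 := dist_triangle a y₀ c
      have h2 : dist a y₀ = dist y₀ a := dist_comm _ _
      have h3 := dist_nonneg (x := b) (y := x₀)
      linarith
    | Sum.inr a, Sum.inr b, Sum.inl c =>
      show dist c x₀ + 1 + dist y₀ a ≤ dist a b + (dist c x₀ + 1 + dist y₀ b)
      have h1 := dist_triangle y₀ b a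
      have h2 : dist b a = dist a b := dist_comm _ _
      linarith
    | Sum.inr a, Sum.inr b, Sum.inr c => exact dist_triangle a b c
  eq_of_dist_eq_zero := fun {p q} h => by
    match p, q, h with
    | Sum.inl a, Sum.inl b, h => exact congrArg Sum.inl (eq_of_dist_eq_zero h)
    | Sum.inl a, Sum.inr b, h =>
      exfalso
      have h1 := dist_nonneg (x := a) (y := x₀)
      have h2 := dist_nonneg (x := y₀) (y := b)
      have h' : dist a x₀ + 1 + dist y₀ b = 0 := h
      linarith
    | Sum.inr a, Sum.inl b, h =>
      exfalso
      have h1 := dist_nonneg (x := b) (y := x₀)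
      have h2 := dist_nonneg (x := y₀) (y := a)
      have h' : dist b x₀ + 1 + dist y₀ a = 0 := h
      linarith
    | Sum.inr a, Sum.inr b, h => exact congrArg Sum.inr (eq_of_dist_eq_zero h)

/-- Condition (C): every coarse map into a coarse coproduct factors, up to closeness,
through one of the coproduct injections. -/
def CondC (X : Type u) [MetricSpace X] : Prop :=
  ∀ (Y Z : Type u) [MetricSpace Y] [MetricSpace Z] (y₀ : Y) (z₀ : Z) (f : X → Y ⊕ Z),
    letI := coprodMetric y₀ z₀
    IsCoarse f →
      (∃ g : X → Y, IsCoarse g ∧ Close (Sum.inl ∘ g) f) ∨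
      (∃ h : X → Z, IsCoarse h ∧ Close (Sum.inr ∘ h) f)

/-- The word length of `g` with respect to a generating set `S`: the length of a shortest
word in elements of `S` whose product is `g`. -/
noncomputable def wordLength {G : Type*} [Group G] (S : Set G) (g : G) : ℕ :=
  sInf {n : ℕ | ∃ w : List G, w.length = n ∧ (∀ s ∈ w, s ∈ S) ∧ w.prod = g}

universe u

open Metric

def CoarselyClopen {X : Type*} [PseudoMetricSpace X] (A : Set X) : Prop :=
  ∀ R : ℝ, IsBounded {x ∈ A | ∃ y ∉ A, dist x y ≤ R}

section Coarse

variable {X W W' : Type*} [PseudoMetricSpace X] [PseudoMetricSpace W] [PseudoMetricSpace W']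

theorem Bornologous.isBounded_image {f : X → W} (hf : Bornologous f) {A : Set X}
    (hA : IsBounded A) : IsBounded (f '' A) := by
  obtain ⟨C, hC⟩ := Metric.isBounded_iff.1 hA
  obtain ⟨S, -, hS⟩ := hf (max C 1) (by positivity)
  refine Metric.isBounded_iff.2 ⟨S, ?_⟩
  rintro _ ⟨x, hx, rfl⟩ _ ⟨y, hy, rfl⟩
  exact hS x y ((hC hx hy).trans (le_max_left _ _))

theorem IsCoarse.of_close {f g : X → W} (hf : IsCoarse f) (hgf : Close g f) : IsCoarse g := by
  obtain ⟨R, hR, hgfR⟩ := hgf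
  refine ⟨fun r hr => ?_, fun B hB => ?_⟩
  · obtain ⟨S, hS, hfS⟩ := hf.1 r hr
    refine ⟨R + S + R, by positivity, fun x x' hxx' => ?_⟩
    calc dist (g x) (g x') ≤ dist (g x) (f x) + dist (f x) (f x') + dist (f x') (g x') :=
          dist_triangle4 _ _ _ _
      _ ≤ R + S + R := by
          gcongr
          exacts [hgfR x, hfS x x' hxx', dist_comm (g x') _ ▸ hgfR x']
  · refine (hf.2 _ (hB.cthickening (δ := R))).subset fun x hx => ?_
    exact mem_cthickening_of_dist_le _ _ _ _ hx (dist_comm (g x) _ ▸ hgfR x)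

theorem IsCoarse.of_isometry_comp {ι : W → W'} (hι : Isometry ι) {g : X → W}
    (hg : IsCoarse (ι ∘ g)) : IsCoarse g := by
  refine ⟨fun r hr => ?_, fun B hB => hg.2 _ (hι.lipschitz.isBounded_image hB) |>.subset ?_⟩
  · obtain ⟨S, hS, hgS⟩ := hg.1 r hr
    exact ⟨S, hS, fun x x' h => hι.dist_eq (g x) (g x') ▸ hgS x x' h⟩
  · exact fun x hx => ⟨g x, hx, rfl⟩

end Coarse

section Coproduct

variable {Y Z : Type*} [MetricSpace Y] [MetricSpace Z] (y₀ : Y) (z₀ : Z)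

@[simp]
theorem coprodMetric_dist_inl_inl (a b : Y) :
    letI := coprodMetric y₀ z₀
    dist (Sum.inl a : Y ⊕ Z) (Sum.inl b) = dist a b := rfl

@[simp]
theorem coprodMetric_dist_inl_inr (a : Y) (b : Z) :
    letI := coprodMetric y₀ z₀
    dist (Sum.inl a : Y ⊕ Z) (Sum.inr b) = dist a y₀ + 1 + dist z₀ b := rfl

@[simp]
theorem coprodMetric_dist_inr_inl (a : Z) (b : Y) :
    letI := coprodMetric y₀ z₀
    dist (Sum.inr a : Y ⊕ Z) (Sum.inl b) = dist b y₀ + 1 + dist z₀ a := rfl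

@[simp]
theorem coprodMetric_dist_inr_inr (a b : Z) :
    letI := coprodMetric y₀ z₀
    dist (Sum.inr a : Y ⊕ Z) (Sum.inr b) = dist a b := rfl

theorem isometry_inl_coprodMetric :
    letI := coprodMetric y₀ z₀
    Isometry (Sum.inl : Y → Y ⊕ Z) :=
  letI := coprodMetric y₀ z₀
  Isometry.of_dist_eq fun _ _ => rfl

theorem isometry_inr_coprodMetric :
    letI := coprodMetric y₀ z₀
    Isometry (Sum.inr : Z → Y ⊕ Z) :=
  letI := coprodMetric y₀ z₀
  Isometry.of_dist_eq fun _ _ => rfl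

variable {X : Type*} [PseudoMetricSpace X]

theorem exists_isCoarse_close_inr {f : X → Y ⊕ Z} :
    letI := coprodMetric y₀ z₀
    IsCoarse f → IsBounded (f ⁻¹' Set.range Sum.inl) →
      ∃ h : X → Z, IsCoarse h ∧ Close (Sum.inr ∘ h) f := by
  let := coprodMetric y₀ z₀
  intro hf hA
  obtain ⟨r, hr⟩ := (isBounded_iff_subset_closedBall (Sum.inl y₀)).1 (hf.1.isBounded_image hA)
  have hclose : Close (Sum.inr ∘ fun x => (f x).elim (fun _ => z₀) id) f := by
    refine ⟨max r 0 + 1, by positivity, fun x => ?_⟩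
    rcases hfx : f x with y | z
    · have : dist y y₀ ≤ r := by simpa [hfx] using hr ⟨x, by simp [hfx], rfl⟩
      simp only [hfx, Function.comp_apply, Sum.elim_inl, coprodMetric_dist_inr_inl, dist_self]
      linarith [le_max_left r 0]
    · simp only [hfx, Function.comp_apply, Sum.elim_inr, id, dist_self]
      positivity
  exact ⟨_, (hf.of_close hclose).of_isometry_comp (isometry_inr_coprodMetric y₀ z₀), hclose⟩

theorem exists_isCoarse_close_inl {f : X → Y ⊕ Z} :
    letI := coprodMetric y₀ z₀
    IsCoarse f → IsBounded (f ⁻¹' Set.range Sum.inr) →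
      ∃ g : X → Y, IsCoarse g ∧ Close (Sum.inl ∘ g) f := by
  let := coprodMetric y₀ z₀
  intro hf hA
  obtain ⟨r, hr⟩ := (isBounded_iff_subset_closedBall (Sum.inr z₀)).1 (hf.1.isBounded_image hA)
  have hclose : Close (Sum.inl ∘ fun x => (f x).elim id fun _ => y₀) f := by
    refine ⟨max r 0 + 1, by positivity, fun x => ?_⟩
    rcases hfx : f x with y | z
    · simp only [hfx, Function.comp_apply, Sum.elim_inl, id, dist_self]
      positivity
    · have : dist z z₀ ≤ r := by simpa [hfx] using hr ⟨x, by simp [hfx], rfl⟩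
      simp only [hfx, Function.comp_apply, Sum.elim_inr, coprodMetric_dist_inl_inr, dist_self,
        dist_comm z₀ z]
      linarith [le_max_left r 0]
  exact ⟨_, (hf.of_close hclose).of_isometry_comp (isometry_inl_coprodMetric y₀ z₀), hclose⟩

theorem coarselyClopen_preimage_range_inl {f : X → Y ⊕ Z} :
    letI := coprodMetric y₀ z₀
    IsCoarse f → CoarselyClopen (f ⁻¹' Set.range Sum.inl) := by
  let := coprodMetric y₀ z₀
  intro hf R
  obtain ⟨S, -, hS⟩ := hf.1 (max R 1) (by positivity)
  refine (hf.2 _ (isBounded_closedBall (x := Sum.inl y₀) (r := S))).subset ?_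
  rintro x ⟨⟨y, hy⟩, x', hx', hxx'⟩
  have hff := hS x x' (hxx'.trans (le_max_left _ _))
  rcases hfx' : f x' with y' | z
  · exact (hx' ⟨y', hfx'.symm⟩).elim
  rw [← hy, hfx', coprodMetric_dist_inl_inr] at hff
  rw [Set.mem_preimage, ← hy, mem_closedBall, coprodMetric_dist_inl_inl]
  linarith [dist_nonneg (x := z₀) (y := z)]

end Coproduct

theorem CoarselyClopen.isCoarse_piecewise {X : Type*} [MetricSpace X] {A : Set X}
    [DecidablePred (· ∈ A)] (hA : CoarselyClopen A) (x₀ : X) :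
    letI := coprodMetric x₀ x₀
    IsCoarse (A.piecewise Sum.inl Sum.inr) := by
  let := coprodMetric x₀ x₀
  refine ⟨fun R hR => ?_, fun B hB => ?_⟩
  · obtain ⟨M, hM, hAM⟩ := (hA R).subset_closedBall_lt 0 x₀
    have cross : ∀ x ∈ A, ∀ x' ∉ A, dist x x' ≤ R →
        dist x x₀ + 1 + dist x₀ x' ≤ 2 * M + 1 + R := by
      intro x hx x' hx' hxx'
      have hxM : dist x x₀ ≤ M := hAM ⟨hx, x', hx', hxx'⟩
      linarith [dist_triangle x₀ x x', dist_comm x x₀]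
    refine ⟨2 * M + 1 + R, by positivity, fun x x' hxx' => ?_⟩
    by_cases hx : x ∈ A <;> by_cases hx' : x' ∈ A <;> simp only [hx, hx', Set.piecewise_eq_of_mem,
      Set.piecewise_eq_of_notMem, not_false_eq_true, coprodMetric_dist_inl_inl,
      coprodMetric_dist_inl_inr, coprodMetric_dist_inr_inl, coprodMetric_dist_inr_inr]
    · linarith
    · exact cross x hx x' hx' hxx'
    · exact cross x' hx' x hx (dist_comm x x' ▸ hxx')
    · linarith
  · obtain ⟨r, hr⟩ := (isBounded_iff_subset_closedBall (Sum.inl x₀)).1 hB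
    refine (isBounded_closedBall (x := x₀) (r := r)).subset fun x hx => ?_
    have hxr : dist (A.piecewise Sum.inl Sum.inr x) (Sum.inl x₀) ≤ r := hr hx
    rw [mem_closedBall]
    by_cases hxA : x ∈ A
    · simpa [hxA] using hxr
    · simp only [hxA, Set.piecewise_eq_of_notMem, not_false_eq_true, coprodMetric_dist_inr_inl,
        dist_self] at hxr
      linarith [dist_comm x x₀]

theorem CondC.isBounded_or_isBounded_compl {X : Type u} [MetricSpace X] (hX : CondC X)
    {A : Set X} (hA : CoarselyClopen A) : IsBounded A ∨ IsBounded Aᶜ := by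
  classical
  rcases isEmpty_or_nonempty X with hempty | ⟨⟨x₀⟩⟩
  · exact Or.inl A.toFinite.isBounded
  let := coprodMetric x₀ x₀
  rcases hX X X x₀ x₀ _ (hA.isCoarse_piecewise x₀) with ⟨g, -, R, -, hR⟩ | ⟨h, -, R, -, hR⟩
  · refine Or.inr ((isBounded_iff_subset_closedBall x₀).2 ⟨R, fun x hx => ?_⟩)
    have hxR := hR x
    rw [Function.comp_apply, Set.piecewise_eq_of_notMem _ _ _ hx, coprodMetric_dist_inl_inr] at hxR
    rw [mem_closedBall, dist_comm]
    linarith [dist_nonneg (x := g x) (y := x₀)]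
  · refine Or.inl ((isBounded_iff_subset_closedBall x₀).2 ⟨R, fun x hx => ?_⟩)
    have hxR := hR x
    rw [Function.comp_apply, Set.piecewise_eq_of_mem _ _ _ hx, coprodMetric_dist_inr_inl] at hxR
    rw [mem_closedBall]
    linarith [dist_nonneg (x := x₀) (y := h x)]

theorem condC_iff_forall_coarselyClopen {X : Type u} [MetricSpace X] :
    CondC X ↔ ∀ A : Set X, CoarselyClopen A → IsBounded A ∨ IsBounded Aᶜ := by
  refine ⟨fun hX A hA => hX.isBounded_or_isBounded_compl hA, fun h Y Z _ _ y₀ z₀ f hf => ?_⟩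
  let := coprodMetric y₀ z₀
  rcases h _ (coarselyClopen_preimage_range_inl y₀ z₀ hf) with hA | hA
  · exact Or.inr (exists_isCoarse_close_inr y₀ z₀ hf hA)
  · rw [← Set.preimage_compl, Set.compl_range_inl] at hA
    exact Or.inl (exists_isCoarse_close_inl y₀ z₀ hf hA)

namespace SimpleGraph

open CategoryTheory Opposite

variable {V : Type*} (Γ : SimpleGraph V)

def innerBoundary (A : Set V) : Set V :=
  {u ∈ A | ∃ v ∉ A, Γ.Adj u v}

variable {Γ}

theorem finite_setOf_exists_walk_length_le [Γ.LocallyFinite] (u : V) (n : ℕ) :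
    {v | ∃ p : Γ.Walk u v, p.length ≤ n}.Finite := by
  induction n generalizing u with
  | zero =>
    refine (Set.finite_singleton u).subset ?_
    rintro v ⟨p, hp⟩
    exact (Walk.eq_of_length_eq_zero (Nat.le_zero.1 hp)).symm
  | succ n ih =>
    refine ((Set.finite_singleton u).union
      ((Γ.neighborSet u).toFinite.biUnion fun w _ => ih w)).subset ?_
    rintro v ⟨_ | ⟨hadj, p⟩, hp⟩
    · exact Or.inl rfl
    · exact Or.inr (Set.mem_biUnion hadj ⟨p, by simpa using hp⟩)

theorem Preconnected.finite_setOf_dist_le [Γ.LocallyFinite] (hΓ : Γ.Preconnected) (u : V)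
    (n : ℕ) : {v | Γ.dist u v ≤ n}.Finite :=
  (finite_setOf_exists_walk_length_le u n).subset fun v hv => by
    obtain ⟨p, hp⟩ := (hΓ u v).exists_walk_length_eq_dist
    exact ⟨p, hp ▸ hv⟩

theorem Reachable.exists_mem_innerBoundary_dist_le {u v : V} (huv : Γ.Reachable u v)
    {A : Set V} (hu : u ∈ A) (hv : v ∉ A) :
    ∃ b ∈ Γ.innerBoundary A, Γ.dist u b ≤ Γ.dist u v := by
  classical
  obtain ⟨p, hp⟩ := huv.exists_walk_length_eq_dist
  obtain ⟨d, hd, hdA, hdA'⟩ := p.exists_boundary_dart A hu hv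
  exact ⟨d.fst, ⟨hdA, d.snd, hdA', d.adj⟩,
    hp ▸ (dist_le _).trans (p.length_takeUntil_le_length (p.dart_fst_mem_support_of_mem_darts hd))⟩

theorem ComponentCompl.mem_of_innerBoundary_subset {K A : Set V} (hK : Γ.innerBoundary A ⊆ K)
    {C : Γ.ComponentCompl K} {x y : V} (hx : x ∈ C) (hy : y ∈ C) (hxA : x ∈ A) : y ∈ A := by
  by_contra hyA
  obtain ⟨hxK, rfl⟩ := hx
  obtain ⟨hyK, hyC⟩ := hy
  obtain ⟨p⟩ := ConnectedComponent.exact hyC.symm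
  obtain ⟨d, -, hdA, hdA'⟩ := p.exists_boundary_dart (Subtype.val ⁻¹' A) hxA hyA
  exact d.fst.2 (hK ⟨hdA, d.snd, hdA', d.adj⟩)

theorem Preconnected.exists_componentCompl_inter_infinite [Γ.LocallyFinite]
    (hΓ : Γ.Preconnected) (K : Finset V) {A : Set V} (hA : A.Infinite) :
    ∃ C : Γ.ComponentCompl K, (C.supp ∩ A).Infinite := by
  have : Fact Γ.Preconnected := ⟨hΓ⟩
  by_contra! h
  refine hA ((K.finite_toSet.union (Set.finite_iUnion h)).subset fun v hv => ?_)
  by_cases hvK : v ∈ K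
  · exact Or.inl hvK
  · exact Or.inr (Set.mem_iUnion.2 ⟨_, Γ.componentComplMk_mem hvK, hv⟩)

theorem Preconnected.exists_mem_end_apply_eq [Γ.LocallyFinite] (hΓ : Γ.Preconnected)
    {K : Finset V} {C : Γ.ComponentCompl K} (hC : C.supp.Infinite) :
    ∃ s ∈ Γ.end, s (op K) = C := by
  have : Fact Γ.Preconnected := ⟨hΓ⟩
  have : Infinite V := ⟨fun _ => hC C.supp.toFinite⟩
  let F := Γ.componentComplFunctor
  have : ∀ L, Nonempty (F.obj L) := fun L => Γ.componentCompl_nonempty_of_infinite L.unop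
  have : ∀ L, Finite (F.obj L) := fun L => Γ.componentCompl_finite L.unop
  have hML : F.IsMittagLeffler :=
    F.isMittagLeffler_of_exists_finite_range fun L => ⟨L, 𝟙 L, Set.toFinite _⟩
  have := F.toEventualRanges_nonempty hML
  obtain ⟨s, hs⟩ := F.toEventualRanges.eval_section_surjective_of_surjective
    (F.surjective_toEventualRanges hML) (op K) ⟨C, (Γ.infinite_iff_in_eventualRange C).1 hC⟩
  exact ⟨_, (F.toEventualRangesSectionsEquiv s).2, congrArg Subtype.val hs⟩

theorem infinite_supp_of_mem_end {s} (hs : s ∈ Γ.end) (K : (Finset V)ᵒᵖ) :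
    (s K).supp.Infinite :=
  (Γ.infinite_iff_in_eventualRange _).2
    (Γ.componentComplFunctor.mem_eventualRange_iff.2 fun _ f => ⟨s _, hs f⟩)

theorem end_subsingleton_iff [Γ.LocallyFinite] (hΓ : Γ.Preconnected) :
    Γ.end.Subsingleton ↔ ∀ A : Set V, (Γ.innerBoundary A).Finite → A.Finite ∨ Aᶜ.Finite := by
  constructor
  · intro hend A hA
    by_contra! hinf
    have hK : Γ.innerBoundary A ⊆ hA.toFinset := by simp
    obtain ⟨C, hC⟩ := hΓ.exists_componentCompl_inter_infinite hA.toFinset hinf.1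
    obtain ⟨D, hD⟩ := hΓ.exists_componentCompl_inter_infinite hA.toFinset hinf.2
    obtain ⟨s, hs, rfl⟩ := hΓ.exists_mem_end_apply_eq (hC.mono Set.inter_subset_left)
    obtain ⟨t, ht, rfl⟩ := hΓ.exists_mem_end_apply_eq (hD.mono Set.inter_subset_left)
    obtain ⟨x, hxC, hxA⟩ := hC.nonempty
    obtain ⟨y, hyD, hyA⟩ := hD.nonempty
    rw [hend hs ht] at hxC
    exact hyA (ComponentCompl.mem_of_innerBoundary_subset hK hxC hyD hxA)
  · intro h s hs t ht
    by_contra hst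
    obtain ⟨K, hK⟩ := Function.ne_iff.1 hst
    have hbd : (Γ.innerBoundary (s K).supp).Finite := by
      refine (K.unop.finite_toSet.biUnion fun k _ => (Γ.neighborSet k).toFinite).subset ?_
      rintro u ⟨hu, v, hv, huv⟩
      have hvK : v ∈ K.unop := by_contra fun hvK => hv (ComponentCompl.mem_of_adj u v hu hvK huv)
      exact Set.mem_biUnion hvK huv.symm
    rcases h _ hbd with hfin | hfin
    · exact infinite_supp_of_mem_end hs K hfin
    · refine infinite_supp_of_mem_end ht K (hfin.subset fun v hvt hvs => hK ?_)
      exact ComponentCompl.pairwise_disjoint.eq (Set.not_disjoint_iff.2 ⟨v, hvs, hvt⟩)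

end SimpleGraph

section GraphMetric

variable {V X : Type*} [PseudoMetricSpace X] {Γ : SimpleGraph V} [Γ.LocallyFinite]
  (hΓ : Γ.Preconnected) (e : V ≃ X) (he : ∀ u v, dist (e u) (e v) = Γ.dist u v)
include hΓ he

theorem isBounded_image_iff_finite {A : Set V} : IsBounded (e '' A) ↔ A.Finite := by
  refine ⟨fun hA => ?_, fun hA => (hA.image e).isBounded⟩
  rcases A.eq_empty_or_nonempty with rfl | ⟨u, hu⟩
  · exact Set.finite_empty
  obtain ⟨r, hr⟩ := (isBounded_iff_subset_closedBall (e u)).1 hA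
  refine (hΓ.finite_setOf_dist_le u ⌈r⌉₊).subset fun v hv => ?_
  have hvr : dist (e v) (e u) ≤ r := hr ⟨v, hv, rfl⟩
  rw [dist_comm, he] at hvr
  exact_mod_cast hvr.trans (Nat.le_ceil r)

theorem coarselyClopen_image_iff {A : Set V} :
    CoarselyClopen (e '' A) ↔ (Γ.innerBoundary A).Finite := by
  constructor
  · intro hA
    refine (isBounded_image_iff_finite hΓ e he).1 ((hA 1).subset ?_)
    rintro _ ⟨u, ⟨hu, v, hv, huv⟩, rfl⟩
    refine ⟨⟨u, hu, rfl⟩, e v, fun h => hv (e.injective.mem_set_image.1 h), ?_⟩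
    rw [he, SimpleGraph.dist_eq_one_iff_adj.2 huv, Nat.cast_one]
  · intro hA R
    refine (((isBounded_image_iff_finite hΓ e he).2 hA).cthickening (δ := R)).subset ?_
    rintro _ ⟨⟨u, hu, rfl⟩, x, hx, hux⟩
    obtain ⟨b, hb, hub⟩ := (hΓ u (e.symm x)).exists_mem_innerBoundary_dist_le hu
      fun h => hx ⟨_, h, e.apply_symm_apply x⟩
    refine mem_cthickening_of_dist_le _ (e b) _ _ ⟨b, hb, rfl⟩ ?_
    calc dist (e u) (e b) ≤ dist (e u) (e (e.symm x)) := by rw [he, he]; exact_mod_cast hub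
      _ ≤ R := by rwa [e.apply_symm_apply]

end GraphMetric

theorem condC_iff_end_subsingleton {V : Type*} {X : Type u} [MetricSpace X] {Γ : SimpleGraph V}
    [Γ.LocallyFinite] (hΓ : Γ.Preconnected) (e : V ≃ X)
    (he : ∀ u v, dist (e u) (e v) = Γ.dist u v) : CondC X ↔ Γ.end.Subsingleton := by
  rw [condC_iff_forall_coarselyClopen, Γ.end_subsingleton_iff hΓ]
  refine ⟨fun h A hA => ?_, fun h A hA => ?_⟩
  · simpa only [← e.image_compl, isBounded_image_iff_finite hΓ e he] using
      h (e '' A) ((coarselyClopen_image_iff hΓ e he).2 hA)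
  · rw [← e.image_preimage A, coarselyClopen_image_iff hΓ e he] at hA
    rw [← e.image_preimage A, ← e.image_compl, isBounded_image_iff_finite hΓ e he,
      isBounded_image_iff_finite hΓ e he]
    exact h _ hA

section WordLength

variable {G : Type*} [Group G] {S : Set G} {g : G} {w : List G}

theorem wordLength_le_length (hw : ∀ s ∈ w, s ∈ S) (hprod : w.prod = g) :
    wordLength S g ≤ w.length :=
  Nat.sInf_le ⟨w, rfl, hw, hprod⟩

theorem exists_length_eq_wordLength (hw : ∀ s ∈ w, s ∈ S) (hprod : w.prod = g) :
    ∃ w' : List G, w'.length = wordLength S g ∧ (∀ s ∈ w', s ∈ S) ∧ w'.prod = g :=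
  Nat.sInf_mem (s := {n | ∃ v : List G, v.length = n ∧ (∀ s ∈ v, s ∈ S) ∧ v.prod = g})
    ⟨_, w, rfl, hw, hprod⟩

end WordLength

namespace SimpleGraph

variable {G : Type*} [Group G] {S : Set G}

theorem fromRel_exists_mul_eq_mulCayley (S : Set G) :
    fromRel (fun g h : G => ∃ s ∈ S, s ≠ 1 ∧ h = g * s) = mulCayley S := by
  have key (x y : G) (hxy : x ≠ y) : (∃ s ∈ S, s ≠ 1 ∧ y = x * s) ↔ x⁻¹ * y ∈ S := by
    refine ⟨fun ⟨s, hs, _, hy⟩ => by simpa [hy] using hs, fun hs => ⟨_, hs, ?_, by simp⟩⟩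
    simpa [inv_mul_eq_one] using hxy
  ext g h
  rw [fromRel_adj, mulCayley_adj]
  exact and_congr_right fun hgh => or_congr (key g h hgh) (key h g hgh.symm)

theorem mulCayley_adj_mul {g s : G} (hs : s ∈ S ∨ s⁻¹ ∈ S) (hs1 : s ≠ 1) :
    (mulCayley S).Adj g (g * s) :=
  (mulCayley_adj _ _ _).2 ⟨by simpa using hs1, by simpa using hs⟩

theorem exists_walk_mulCayley_of_word {w : List G} (hw : ∀ s ∈ w, s ∈ S) (g : G) :
    ∃ p : (mulCayley S).Walk g (g * w.prod), p.length ≤ w.length := by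
  induction w generalizing g with
  | nil => exact ⟨Walk.nil.copy rfl (by simp), (Walk.length_copy _ _ _).le⟩
  | cons s w ih =>
    rw [List.forall_mem_cons] at hw
    obtain ⟨p, hp⟩ := ih hw.2 (g * s)
    rw [List.prod_cons, ← mul_assoc]
    by_cases hs1 : s = 1
    · subst hs1
      exact ⟨p.copy (mul_one g) rfl, by simpa using hp.trans (Nat.le_succ _)⟩
    · exact ⟨.cons (mulCayley_adj_mul (.inl hw.1) hs1) p, by simpa using hp⟩

theorem exists_word_of_walk_mulCayley (hinv : ∀ s ∈ S, s⁻¹ ∈ S) {g h : G}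
    (p : (mulCayley S).Walk g h) :
    ∃ w : List G, (∀ s ∈ w, s ∈ S) ∧ w.prod = g⁻¹ * h ∧ w.length = p.length := by
  induction p with
  | nil => exact ⟨[], by simp, by simp, rfl⟩
  | @cons g k h hadj p ih =>
    obtain ⟨w, hw, hprod, hlen⟩ := ih
    have hs : g⁻¹ * k ∈ S := by
      rcases ((mulCayley_adj _ _ _).1 hadj).2 with hs | hs
      · exact hs
      · simpa using hinv _ hs
    exact ⟨(g⁻¹ * k) :: w, List.forall_mem_cons.2 ⟨hs, hw⟩, by simp [hprod, mul_assoc],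
      by simp [hlen]⟩

theorem mulCayley_preconnected (hS : Subgroup.closure S = ⊤) : (mulCayley S).Preconnected := by
  have reach (g s : G) (hs : s ∈ S ∨ s⁻¹ ∈ S) : (mulCayley S).Reachable g (g * s) := by
    by_cases hs1 : s = 1
    · simp [hs1]
    · exact (mulCayley_adj_mul hs hs1).reachable
  have reach_one (g : G) : (mulCayley S).Reachable 1 g :=
    Subgroup.closure_induction_right (p := fun x _ => (mulCayley S).Reachable 1 x) (.refl 1)
      (fun x _ s hs h => h.trans (reach x s (.inl hs)))
      (fun x _ s hs h => h.trans (reach x s⁻¹ (.inr (by simpa using hs))))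
      (hS ▸ Subgroup.mem_top g)
  exact fun g h => (reach_one g).symm.trans (reach_one h)

theorem finite_neighborSet_mulCayley (hS : S.Finite) (g : G) :
    ((mulCayley S).neighborSet g).Finite :=
  ((hS.union hS.inv).image (g * ·)).subset fun h hgh => by
    rcases ((mulCayley_adj _ _ _).1 hgh).2 with hs | hs
    · exact ⟨g⁻¹ * h, .inl hs, by simp⟩
    · exact ⟨g⁻¹ * h, .inr (by simpa using hs), by simp⟩

end SimpleGraph

open SimpleGraph in
theorem wordLength_inv_mul_eq_mulCayley_dist {G : Type*} [Group G] {S : Set G}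
    (hinv : ∀ s ∈ S, s⁻¹ ∈ S) (hΓ : (mulCayley S).Preconnected) (g h : G) :
    wordLength S (g⁻¹ * h) = (mulCayley S).dist g h := by
  obtain ⟨p, hp⟩ := (hΓ g h).exists_walk_length_eq_dist
  obtain ⟨w, hw, hprod, hlen⟩ := exists_word_of_walk_mulCayley hinv p
  refine le_antisymm ((wordLength_le_length hw hprod).trans (hlen.trans hp).le) ?_
  obtain ⟨w, hlen, hw, hprod⟩ := exists_length_eq_wordLength hw hprod
  obtain ⟨q, hq⟩ := exists_walk_mulCayley_of_word hw g
  rw [← hlen]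
  exact (dist_le (q.copy rfl (by rw [hprod, mul_inv_cancel_left]))).trans (by simpa using hq)

/-- a finitely generated group, equipped with the word-length metric coming from
a finite symmetric generating set `S`, satisfies condition (C) (equivalently, has connected
Higson corona) iff it has at most one end, i.e. its Cayley graph with respect to `S` has at
most one end. -/
theorem group_condC_iff_at_most_one_end {G : Type u} [Group G] [MetricSpace G]
    (S : Finset G) (hinv : ∀ s ∈ S, s⁻¹ ∈ S)
    (hgen : Subgroup.closure (S : Set G) = ⊤)
    (hdist : ∀ g h : G, dist g h = (wordLength (S : Set G) (g * h⁻¹) : ℝ)) :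
    CondC G ↔
      (SimpleGraph.fromRel fun g h : G => ∃ s ∈ S, s ≠ 1 ∧ h = g * s).end.Subsingleton := by
  have hcayley : (SimpleGraph.fromRel fun g h : G => ∃ s ∈ S, s ≠ 1 ∧ h = g * s) =
      SimpleGraph.mulCayley (S : Set G) := SimpleGraph.fromRel_exists_mul_eq_mulCayley _
  rw [hcayley]
  have hconn := SimpleGraph.mulCayley_preconnected hgen
  let : (SimpleGraph.mulCayley (S : Set G)).LocallyFinite := fun g =>
    (SimpleGraph.finite_neighborSet_mulCayley S.finite_toSet g).fintype
  refine condC_iff_end_subsingleton hconn (Equiv.inv G) fun g h => ?_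
  rw [hdist, Equiv.inv_apply, inv_inv,
    wordLength_inv_mul_eq_mulCayley_dist hinv hconn]
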